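/- arXiv:2211.03951 — 2 statements merged into one kernel-verified Lean document; each statement's English description precedes it below -/
import Mathlib

section
/- Let m ≥ 2, let Γ be the free group on m generators a_1, …, a_m, and let μ be the uniform distribution on the set {a_1, …, a_m} (which freely generates a free semigroup). Then for every ρ ∈ [0,1] the asymptotic entropy of the π^ρ-random walk on Γ × Γ equals h(π^ρ) = log m − (1 − ((m−1)/m)ρ) log(1 − ((m−1)/m)ρ) − ((m−1)/m)ρ log(ρ/m). In particular h(π^1) = 2 log m and h(π^ρ) < h(π^1) whenever ρ < 1. -/
open Filter Real Topology MeasureTheory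
open scoped ENNReal

namespace NS

/-- The probability of a set under a `PMF`, as a real number. -/
noncomputable def pmfSet {X : Type*} (μ : PMF X) (A : Set X) : ℝ :=
  (∑' x : A, μ (x : X)).toReal

/-- Total variation distance between two `PMF`s: `sup_{A ⊆ X} |μ(A) - ν(A)|`. -/
noncomputable def tv {X : Type*} (μ ν : PMF X) : ℝ :=
  ⨆ A : Set X, |pmfSet μ A - pmfSet ν A|

/-- Convolution of two probability measures on a group. -/
noncomputable def conv {G : Type*} [Group G] (μ ν : PMF G) : PMF G :=
  μ.bind fun x => ν.map fun y => x * y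

/-- `n`-fold convolution of a probability measure on a group (law of `w_n = x_1 ⋯ x_n`). -/
noncomputable def convN {G : Type*} [Group G] (μ : PMF G) : ℕ → PMF G
  | 0 => PMF.pure 1
  | n + 1 => conv (convN μ n) μ

/-- Product of two probability measures. -/
noncomputable def prodPMF {X Y : Type*} (μ : PMF X) (ν : PMF Y) : PMF (X × Y) :=
  μ.bind fun x => ν.map fun y => (x, y)

/-- Diagonal embedding `μ_diag` of a probability measure: `μ_diag((x,y)) = μ(x)` if `x = y`. -/
noncomputable def diagPMF {X : Type*} (μ : PMF X) : PMF (X × X) :=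
  μ.map fun x => (x, x)

/-- Convex combination `ρ·μ + (1-ρ)·ν` of two `PMF`s, for `ρ ∈ [0,1]`. -/
noncomputable def mix {X : Type*} (ρ : ℝ) (μ ν : PMF X) : PMF X :=
  (PMF.bernoulli (min (Real.toNNReal ρ) 1) (min_le_right _ _)).bind
    fun b => if b then μ else ν

/-- The measure `π^ρ := ρ·(μ×μ) + (1-ρ)·μ_diag` on `G × G`. -/
noncomputable def piRho {G : Type*} [Group G] (μ : PMF G) (ρ : ℝ) : PMF (G × G) :=
  mix ρ (prodPMF μ μ) (diagPMF μ)

/-- Shannon entropy `H(μ) = -∑ μ(x) log μ(x)` of a `PMF`. -/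
noncomputable def entH {X : Type*} (μ : PMF X) : ℝ :=
  ∑' x, Real.negMulLog ((μ x).toReal)

/-- `d` is the left-invariant word metric associated with the generating set `S`. -/
def IsWordMetric {G : Type*} [Group G] (S : Finset G) (d : G → G → ℝ) : Prop :=
  ∀ x y : G, d x y =
    ((sInf {n : ℕ | ∃ f : Fin n → G, (∀ i, f i ∈ S) ∧ x⁻¹ * y = (List.ofFn f).prod} : ℕ) : ℝ)

/-- Gromov product `(x|y)_w = (d(x,w) + d(y,w) - d(x,y))/2`. -/
noncomputable def gromov {G : Type*} (d : G → G → ℝ) (w x y : G) : ℝ :=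
  (d x w + d y w - d x y) / 2

/-- Gromov hyperbolicity of a metric, via the Gromov product four-point condition. -/
def IsHyperbolic {G : Type*} (d : G → G → ℝ) : Prop :=
  ∃ δ : ℝ, 0 ≤ δ ∧ ∀ x y z w : G,
    min (gromov d w x z) (gromov d w z y) - δ ≤ gromov d w x y

/-- `μ` is non-elementary: the subgroup generated by its support contains
a free subgroup of rank 2. -/
def NonElementary {G : Type*} [Group G] (μ : PMF G) : Prop :=
  ∃ φ : FreeGroup (Fin 2) →* G,
    Function.Injective φ ∧ ∀ w, φ w ∈ Subgroup.closure μ.support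

/-- `μ` has finite first moment: `∑_x d(o,x) μ(x) < ∞`. -/
def FiniteFirstMoment {G : Type*} [Group G] (d : G → G → ℝ) (μ : PMF G) : Prop :=
  Summable fun x => d 1 x * (μ x).toReal

/-- `d` is a left-invariant metric on the group `G`. -/
def IsLeftInvMetric {G : Type*} [Group G] (d : G → G → ℝ) : Prop :=
  (∀ x y : G, 0 ≤ d x y) ∧ (∀ x y : G, d x y = 0 ↔ x = y) ∧
  (∀ x y : G, d x y = d y x) ∧ (∀ x y z : G, d x z ≤ d x y + d y z) ∧
  (∀ g x y : G, d (g * x) (g * y) = d x y)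

/-- The growth function `R ↦ (1/R) log #{x : |x| ≤ R}`. -/
noncomputable def growthFn {G : Type*} [Group G] (d : G → G → ℝ) : ℝ → ℝ :=
  fun R => Real.log (Nat.card {x : G | d 1 x ≤ R}) / R

/-- `d` has finite exponential growth rate:
balls are finite and `limsup_{R→∞} (1/R) log #B(o,R) < ∞`. -/
def FiniteExpGrowth {G : Type*} [Group G] (d : G → G → ℝ) : Prop :=
  (∀ R : ℝ, {x : G | d 1 x ≤ R}.Finite) ∧
  Filter.IsBoundedUnder (· ≤ ·) Filter.atTop (growthFn d)

/-- The exponential growth rate `v = limsup_{R→∞} (1/R) log #B(o,R)`. -/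
noncomputable def expRate {G : Type*} [Group G] (d : G → G → ℝ) : ℝ :=
  Filter.limsup (growthFn d) Filter.atTop

/-- Uniform first moment condition (M) for a set of probability measures. -/
def UnifFirstMoment {G : Type*} [Group G] (d : G → G → ℝ) (M : Set (PMF G)) : Prop :=
  (∀ μ ∈ M, Summable fun x => d 1 x * (μ x).toReal) ∧
  ∀ K : ℕ → Finset G, Monotone K → (⋃ n, (K n : Set G)) = Set.univ →
    ∀ ε > 0, ∃ N : ℕ, ∀ n ≥ N, ∀ μ ∈ M,
      (∑' x : {x : G // x ∉ K n}, d 1 (x : G) * (μ (x : G)).toReal) ≤ ε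

open scoped Classical in
/-- The explicit entropy formula
`h(π^ρ) = log m - (1 - ((m-1)/m)ρ) log(1 - ((m-1)/m)ρ) - ((m-1)/m)ρ log(ρ/m)`. -/
noncomputable def hFormula (m : ℕ) (ρ : ℝ) : ℝ :=
  Real.log m - (1 - ((m : ℝ) - 1) / m * ρ) * Real.log (1 - ((m : ℝ) - 1) / m * ρ)
    - ((m : ℝ) - 1) / m * ρ * Real.log (ρ / m)

/-! The support of `π^ρ` lies in the pairs `(aᵢ, aⱼ)`, which freely generate a free submonoid
of `Γ × Γ`: a product of such pairs determines its factors. So the `n`-step law is the image of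
the `n`-fold product law under a map that is injective on its support, `H(π^ρ_n) = n H(π^ρ)`
exactly, and `h(π^ρ) = H(π^ρ)`. This is a finite sum over `m` diagonal atoms of mass
`ρ/m² + (1-ρ)/m` and `m² - m` off-diagonal atoms of mass `ρ/m²`; by strict concavity of
`t ↦ -t log t` it is below `log m² = H(π^1)` unless the two masses agree, that is unless
`ρ = 1`. -/

section FreeMonoidBasis

variable {M N : Type*} [Monoid M] [Monoid N]

def IsFreeMonoidBasis (S : Set M) : Prop :=
  Set.InjOn List.prod {L : List M | ∀ x ∈ L, x ∈ S}

lemma IsFreeMonoidBasis.mono {S T : Set M} (hT : IsFreeMonoidBasis T) (hST : S ⊆ T) :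
    IsFreeMonoidBasis S :=
  Set.InjOn.mono (fun _ hL x hx => hST (hL x hx)) hT

lemma IsFreeMonoidBasis.prod {S : Set M} {T : Set N} (hS : IsFreeMonoidBasis S)
    (hT : IsFreeMonoidBasis T) : IsFreeMonoidBasis (S ×ˢ T) := by
  intro L₁ h₁ L₂ h₂ h
  have hfst : L₁.map Prod.fst = L₂.map Prod.fst := by
    refine hS (List.forall_mem_map.2 fun x hx => (h₁ x hx).1)
      (List.forall_mem_map.2 fun x hx => (h₂ x hx).1) ?_
    rw [← MonoidHom.coe_fst, ← map_list_prod, ← map_list_prod, h]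
  have hsnd : L₁.map Prod.snd = L₂.map Prod.snd := by
    refine hT (List.forall_mem_map.2 fun x hx => (h₁ x hx).2)
      (List.forall_mem_map.2 fun x hx => (h₂ x hx).2) ?_
    rw [← MonoidHom.coe_snd, ← map_list_prod, ← map_list_prod, h]
  exact (List.zip_of_prod hfst hsnd).trans (List.zip_of_prod rfl rfl).symm

lemma IsFreeMonoidBasis.injOn_mul {S : Set M} (hS : IsFreeMonoidBasis S) :
    Set.InjOn (fun p : M × M => p.1 * p.2) ((Submonoid.closure S : Set M) ×ˢ S) := by
  rintro ⟨g₁, s₁⟩ ⟨hg₁, hs₁⟩ ⟨g₂, s₂⟩ ⟨hg₂, hs₂⟩ h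
  obtain ⟨L₁, hL₁, rfl⟩ := Submonoid.exists_list_of_mem_closure hg₁
  obtain ⟨L₂, hL₂, rfl⟩ := Submonoid.exists_list_of_mem_closure hg₂
  have : L₁ ++ [s₁] = L₂ ++ [s₂] :=
    hS (by simpa [or_imp, forall_and] using ⟨hL₁, hs₁⟩)
      (by simpa [or_imp, forall_and] using ⟨hL₂, hs₂⟩) (by simpa using h)
  obtain ⟨rfl, hs⟩ := List.append_inj' this rfl
  simpa using hs

end FreeMonoidBasis

lemma FreeGroup.prod_map_of {α : Type*} (L : List α) :
    (L.map FreeGroup.of).prod = FreeGroup.mk (L.map (·, true)) := by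
  induction L with
  | nil => rfl
  | cons a L ih => rw [List.map_cons, List.prod_cons, ih, FreeGroup.of, FreeGroup.mul_mk]; rfl

lemma FreeGroup.isFreeMonoidBasis_range_of {α : Type*} :
    IsFreeMonoidBasis (Set.range (FreeGroup.of : α → FreeGroup α)) := by
  classical
  have hred (L : List α) : FreeGroup.IsReduced (L.map (·, true)) := by
    induction L with
    | nil => exact .nil
    | cons a L ih => cases L <;> simp_all [FreeGroup.isReduced_cons_cons]
  rw [IsFreeMonoidBasis, ← Set.range_list_map]
  rintro _ ⟨L₁, rfl⟩ _ ⟨L₂, rfl⟩ h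
  rw [FreeGroup.prod_map_of, FreeGroup.prod_map_of] at h
  have := congrArg FreeGroup.toWord h
  rw [FreeGroup.toWord_mk, FreeGroup.toWord_mk, (hred L₁).reduce_eq, (hred L₂).reduce_eq]
    at this
  rw [List.map_injective_iff.2 (fun a b hab => (Prod.ext_iff.1 hab).1) this]

section Convolution

variable {X Y G : Type*}

lemma prodPMF_apply (μ : PMF X) (ν : PMF Y) (x : X) (y : Y) :
    prodPMF μ ν (x, y) = μ x * ν y := by
  simp only [prodPMF, PMF.bind_apply, PMF.map_apply, Prod.mk.injEq]
  rw [tsum_eq_single x fun x' hx' => by simp [Ne.symm hx'],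
    tsum_eq_single y fun y' hy' => by simp [Ne.symm hy']]
  simp

lemma support_prodPMF (μ : PMF X) (ν : PMF Y) :
    (prodPMF μ ν).support = μ.support ×ˢ ν.support := by
  ext ⟨x, y⟩
  simp [PMF.mem_support_iff, prodPMF_apply]

variable [Group G]

lemma conv_eq_map_prodPMF (μ ν : PMF G) :
    conv μ ν = (prodPMF μ ν).map fun p => p.1 * p.2 := by
  simp only [conv, prodPMF, PMF.map_bind, PMF.map_comp]
  rfl

lemma support_conv (μ ν : PMF G) :
    (conv μ ν).support = Set.image2 (· * ·) μ.support ν.support := by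
  rw [conv_eq_map_prodPMF, PMF.support_map, support_prodPMF, Set.image_prod]

lemma support_convN_subset_closure (P : PMF G) (n : ℕ) :
    (convN P n).support ⊆ Submonoid.closure P.support := by
  induction n with
  | zero => simp [convN, one_mem]
  | succ n ih =>
    rw [convN, support_conv]
    rintro _ ⟨g, hg, s, hs, rfl⟩
    exact mul_mem (ih hg) (Submonoid.subset_closure hs)

lemma finite_support_convN {P : PMF G} (hP : P.support.Finite) (n : ℕ) :
    (convN P n).support.Finite := by
  induction n with
  | zero => simp [convN]
  | succ n ih => rw [convN, support_conv]; exact ih.image2 _ hP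

end Convolution

section Entropy

variable {X Y : Type*}

lemma entH_eq_sum {μ : PMF X} {s : Finset X} (hs : μ.support ⊆ s) :
    entH μ = ∑ x ∈ s, negMulLog (μ x).toReal :=
  tsum_eq_sum fun x hx => by
    rw [PMF.apply_eq_zero_iff μ x |>.2 fun h => hx (hs h)]; simp

lemma sum_toReal_eq_one {μ : PMF X} {s : Finset X} (hs : μ.support ⊆ s) :
    ∑ x ∈ s, (μ x).toReal = 1 := by
  rw [← ENNReal.toReal_sum fun x _ => μ.apply_ne_top x,
    ← tsum_eq_sum (L := SummationFilter.unconditional _) fun x hx =>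
      (PMF.apply_eq_zero_iff μ x).2 fun h => hx (hs h), μ.tsum_coe, ENNReal.toReal_one]

lemma entH_pure (a : X) : entH (PMF.pure a) = 0 := by
  rw [entH_eq_sum (s := {a}) (by simp)]
  simp

lemma mem_support_of_negMulLog_ne_zero {μ : PMF X} {x : X} (h : negMulLog (μ x).toReal ≠ 0) :
    x ∈ μ.support := fun hx => h (by simp [hx])

lemma map_apply_of_injOn {μ : PMF X} {f : X → Y} (hf : Set.InjOn f μ.support) {x : X}
    (hx : x ∈ μ.support) : μ.map f (f x) = μ x := by
  rw [PMF.map_apply, tsum_eq_single x]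
  · simp
  · intro x' hx'
    by_cases hx'' : x' ∈ μ.support
    · rw [if_neg fun h => hx' (hf hx'' hx h.symm)]
    · simp [(PMF.apply_eq_zero_iff μ x').2 hx'']

lemma entH_map_of_injOn {μ : PMF X} {f : X → Y} (hf : Set.InjOn f μ.support) :
    entH (μ.map f) = entH μ := by
  have hsupp {x : X} (hx : x ∈ Function.support fun x => negMulLog (μ x).toReal) :
      x ∈ μ.support :=
    mem_support_of_negMulLog_ne_zero hx
  refine tsum_eq_tsum_of_ne_zero_bij (fun x => f x) ?_ ?_ ?_
  · rintro ⟨x₁, hx₁⟩ ⟨x₂, hx₂⟩ h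
    exact Subtype.ext (hf (hsupp hx₁) (hsupp hx₂) h)
  · intro y hy
    obtain ⟨x, hx, rfl⟩ := (PMF.support_map f μ).subset (mem_support_of_negMulLog_ne_zero hy)
    refine ⟨⟨x, ?_⟩, rfl⟩
    rwa [Function.mem_support, ← map_apply_of_injOn hf hx]
  · rintro ⟨x, hx⟩
    rw [map_apply_of_injOn hf (hsupp hx)]

lemma entH_prodPMF {μ : PMF X} {ν : PMF Y} (hμ : μ.support.Finite) (hν : ν.support.Finite) :
    entH (prodPMF μ ν) = entH μ + entH ν := by
  classical
  have hsupp : (prodPMF μ ν).support ⊆ ↑(hμ.toFinset ×ˢ hν.toFinset) := by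
    simp [support_prodPMF]
  rw [entH_eq_sum hsupp, entH_eq_sum hμ.coe_toFinset.ge, entH_eq_sum hν.coe_toFinset.ge,
    Finset.sum_product]
  simp only [prodPMF_apply, ENNReal.toReal_mul, negMulLog_mul, Finset.sum_add_distrib,
    ← Finset.mul_sum, ← Finset.sum_mul, sum_toReal_eq_one hμ.coe_toFinset.ge,
    sum_toReal_eq_one hν.coe_toFinset.ge]
  ring

end Entropy

section FreeConvolution

variable {G : Type*} [Group G]

lemma entH_conv_of_injOn {μ ν : PMF G} (hμ : μ.support.Finite) (hν : ν.support.Finite)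
    (hinj : Set.InjOn (fun p : G × G => p.1 * p.2) (μ.support ×ˢ ν.support)) :
    entH (conv μ ν) = entH μ + entH ν := by
  rw [conv_eq_map_prodPMF, entH_map_of_injOn (by rwa [support_prodPMF]), entH_prodPMF hμ hν]

theorem entH_convN_of_isFreeMonoidBasis {P : PMF G} (hP : IsFreeMonoidBasis P.support)
    (hfin : P.support.Finite) (n : ℕ) : entH (convN P n) = n * entH P := by
  induction n with
  | zero => simp [convN, entH_pure]
  | succ n ih =>
    rw [convN, entH_conv_of_injOn (finite_support_convN hfin n) hfin
      (hP.injOn_mul.mono (Set.prod_mono (support_convN_subset_closure P n) le_rfl)), ih]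
    push_cast
    ring

theorem tendsto_entH_convN_div_of_isFreeMonoidBasis {P : PMF G}
    (hP : IsFreeMonoidBasis P.support) (hfin : P.support.Finite) :
    Tendsto (fun n : ℕ => entH (convN P n) / n) atTop (𝓝 (entH P)) := by
  refine tendsto_const_nhds.congr' ?_
  filter_upwards [eventually_ne_atTop 0] with n hn
  rw [entH_convN_of_isFreeMonoidBasis hP hfin, mul_div_cancel_left₀ _ (Nat.cast_ne_zero.2 hn)]

end FreeConvolution

section PiRho

variable {X G : Type*}

lemma toReal_mix_apply {ρ : ℝ} (h0 : 0 ≤ ρ) (h1 : ρ ≤ 1) (μ ν : PMF X) (x : X) :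
    (mix ρ μ ν x).toReal = ρ * (μ x).toReal + (1 - ρ) * (ν x).toReal := by
  have hρ : min (Real.toNNReal ρ) 1 = Real.toNNReal ρ := min_eq_left (by simpa using h1)
  rw [mix, PMF.bind_apply, tsum_bool]
  simp only [PMF.bernoulli_apply, hρ, cond_true, cond_false, if_true, Bool.false_eq_true, if_false]
  rw [ENNReal.toReal_add (ENNReal.mul_ne_top ENNReal.coe_ne_top (ν.apply_ne_top x))
      (ENNReal.mul_ne_top ENNReal.coe_ne_top (μ.apply_ne_top x)),
    ENNReal.toReal_mul, ENNReal.toReal_mul, ENNReal.coe_toReal, ENNReal.coe_toReal,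
    NNReal.coe_sub (by simpa using h1), Real.coe_toNNReal _ h0, NNReal.coe_one]
  ring

lemma diagPMF_apply [DecidableEq X] (μ : PMF X) (x y : X) :
    diagPMF μ (x, y) = if x = y then μ x else 0 := by
  rw [diagPMF, PMF.map_apply]
  split_ifs with h
  · subst h
    rw [tsum_eq_single x fun x' hx' => by simp [Ne.symm hx']]
    simp
  · exact ENNReal.tsum_eq_zero.2 fun x' => if_neg fun h' => h (by simp_all)

lemma support_piRho_subset [Group G] (μ : PMF G) (ρ : ℝ) :
    (piRho μ ρ).support ⊆ μ.support ×ˢ μ.support := by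
  rw [piRho, mix, PMF.support_bind]
  refine Set.iUnion₂_subset fun b _ => ?_
  cases b
  · rw [if_neg Bool.false_ne_true, diagPMF, PMF.support_map]
    rintro _ ⟨x, hx, rfl⟩
    exact ⟨hx, hx⟩
  · rw [if_pos rfl, support_prodPMF]

lemma entH_piRho_of_uniform [Group G] {m : ℕ} {a : Fin m → G} (ha : Function.Injective a)
    {μ : PMF G} (hμ_supp : μ.support ⊆ Set.range a)
    (hμ_apply : ∀ i, μ (a i) = (m : ℝ≥0∞)⁻¹)
    {ρ : ℝ} (h0 : 0 ≤ ρ) (h1 : ρ ≤ 1) :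
    entH (piRho μ ρ) =
      m * negMulLog (ρ / m ^ 2 + (1 - ρ) / m) + (m ^ 2 - m) * negMulLog (ρ / m ^ 2) := by
  classical
  have hsupp : (Function.support fun z => negMulLog (piRho μ ρ z).toReal) ⊆
      Set.range (Prod.map a a) := by
    rw [Set.range_prodMap]
    exact fun z hz => (support_piRho_subset μ ρ).trans (Set.prod_mono hμ_supp hμ_supp)
      (mem_support_of_negMulLog_ne_zero hz)
  have hval (i j : Fin m) : negMulLog (piRho μ ρ (a i, a j)).toReal =
      negMulLog (ρ / m ^ 2) +
        if i = j then negMulLog (ρ / m ^ 2 + (1 - ρ) / m) - negMulLog (ρ / m ^ 2) else 0 := by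
    rw [piRho, toReal_mix_apply h0 h1, prodPMF_apply, diagPMF_apply, ha.eq_iff]
    split_ifs <;> simp [hμ_apply] <;> ring_nf
  rw [entH, ← (ha.prodMap ha).tsum_eq hsupp, tsum_fintype, Fintype.sum_prod_type]
  simp only [Prod.map, hval, Finset.sum_add_distrib, Finset.sum_ite_eq, Finset.mem_univ,
    if_true, Finset.sum_const, Finset.card_univ, Fintype.card_fin, nsmul_eq_mul]
  ring

end PiRho

lemma mul_negMulLog_inv {x : ℝ} (hx : x ≠ 0) : x * negMulLog x⁻¹ = log x := by
  simp only [negMulLog, log_inv]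
  field_simp

lemma hFormula_eq_negMulLog {m : ℕ} (hm : m ≠ 0) (ρ : ℝ) :
    hFormula m ρ =
      m * negMulLog (ρ / m ^ 2 + (1 - ρ) / m) + (m ^ 2 - m) * negMulLog (ρ / m ^ 2) := by
  have hm' : (m : ℝ) ≠ 0 := Nat.cast_ne_zero.2 hm
  rw [show ρ / m ^ 2 + (1 - ρ) / m = (1 - (m - 1) / m * ρ) * (m : ℝ)⁻¹ by field_simp; ring,
    show ρ / (m : ℝ) ^ 2 = ρ / m * (m : ℝ)⁻¹ by field_simp, negMulLog_mul, negMulLog_mul,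
    hFormula]
  simp only [negMulLog, log_inv]
  field_simp
  ring

lemma weighted_negMulLog_lt_two_log {m : ℕ} (hm : 2 ≤ m) {a b : ℝ} (ha : 0 ≤ a)
    (hb : 0 ≤ b) (hab : a ≠ b) (hsum : m * a + (m ^ 2 - m) * b = 1) :
    m * negMulLog a + (m ^ 2 - m) * negMulLog b < 2 * log m := by
  have hm' : (2 : ℝ) ≤ m := by exact_mod_cast hm
  have hm0 : (0 : ℝ) < m := by linarith
  have hjensen := strictConcaveOn_negMulLog.2 ha hb hab (inv_pos.2 hm0)
    (sub_pos.2 (inv_lt_one_of_one_lt₀ (by linarith))) (add_sub_cancel _ _)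
  have harg : (m : ℝ)⁻¹ • a + (1 - (m : ℝ)⁻¹) • b = ((m : ℝ) ^ 2)⁻¹ := by
    rw [smul_eq_mul, smul_eq_mul]
    field_simp
    linear_combination hsum
  rw [harg, smul_eq_mul, smul_eq_mul] at hjensen
  calc m * negMulLog a + (m ^ 2 - m) * negMulLog b
      = m ^ 2 * ((m : ℝ)⁻¹ * negMulLog a + (1 - (m : ℝ)⁻¹) * negMulLog b) := by
        field_simp
    _ < m ^ 2 * negMulLog ((m : ℝ) ^ 2)⁻¹ := by gcongr
    _ = 2 * log m := by
        rw [mul_negMulLog_inv (by positivity), log_pow]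
        push_cast
        ring

lemma hFormula_one {m : ℕ} (hm : m ≠ 0) : hFormula m 1 = 2 * log m := by
  rw [hFormula_eq_negMulLog hm, sub_self, zero_div, add_zero, ← add_mul, add_sub_cancel,
    one_div, mul_negMulLog_inv (by positivity), log_pow]
  push_cast
  ring

lemma hFormula_lt_hFormula_one {m : ℕ} (hm : 2 ≤ m) {ρ : ℝ} (h0 : 0 ≤ ρ) (h1 : ρ < 1) :
    hFormula m ρ < hFormula m 1 := by
  have hm0 : (0 : ℝ) < m := by positivity
  have hgap : 0 < (1 - ρ) / m := div_pos (sub_pos.2 h1) hm0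
  rw [hFormula_one (by omega), hFormula_eq_negMulLog (by omega)]
  refine weighted_negMulLog_lt_two_log hm (by positivity) (by positivity)
    (lt_add_of_pos_right _ hgap).ne' ?_
  field_simp
  ring

open scoped Classical in
theorem statement14 (m : ℕ) (hm : 2 ≤ m)
    (μ : PMF (FreeGroup (Fin m)))
    (hμ : ∀ x, μ x = if ∃ i : Fin m, x = FreeGroup.of i then ((m : ℝ≥0∞))⁻¹ else 0) :
    (∀ ρ : ℝ, 0 ≤ ρ → ρ ≤ 1 →
      Filter.Tendsto (fun n : ℕ => entH (convN (piRho μ ρ) n) / (n : ℝ))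
        Filter.atTop (nhds (hFormula m ρ))) ∧
    hFormula m 1 = 2 * Real.log m ∧
    (∀ ρ : ℝ, 0 ≤ ρ → ρ < 1 → hFormula m ρ < hFormula m 1) := by
  have hμ_apply (i : Fin m) : μ (FreeGroup.of i) = (m : ℝ≥0∞)⁻¹ := by
    rw [hμ, if_pos ⟨i, rfl⟩]
  have hμ_supp : μ.support ⊆ Set.range FreeGroup.of := by
    intro x hx
    by_contra hx'
    exact hx (by rw [hμ, if_neg fun ⟨i, hi⟩ => hx' ⟨i, hi.symm⟩])
  refine ⟨fun ρ h0 h1 => ?_, hFormula_one (by omega),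
    fun ρ h0 h1 => hFormula_lt_hFormula_one hm h0 h1⟩
  have hsupp : (piRho μ ρ).support ⊆ Set.range FreeGroup.of ×ˢ Set.range FreeGroup.of :=
    (support_piRho_subset μ ρ).trans (Set.prod_mono hμ_supp hμ_supp)
  have hfree : IsFreeMonoidBasis (piRho μ ρ).support :=
    (FreeGroup.isFreeMonoidBasis_range_of.prod FreeGroup.isFreeMonoidBasis_range_of).mono hsupp
  have hfin : (piRho μ ρ).support.Finite :=
    ((Set.finite_range _).prod (Set.finite_range _)).subset hsupp
  have hent : entH (piRho μ ρ) = hFormula m ρ := by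
    rw [entH_piRho_of_uniform FreeGroup.of_injective hμ_supp hμ_apply h0 h1,
      hFormula_eq_negMulLog (by omega)]
  exact hent ▸ tendsto_entH_convN_div_of_isFreeMonoidBasis hfree hfin

end NS
end

section
/- Let Γ be a countable group with a left-invariant metric d of finite exponential growth rate. If μ is a probability measure on Γ with finite first moment ∑_{x∈Γ} |x| μ(x) < ∞, then μ has finite Shannon entropy: H(μ) = −∑_{x∈Γ} μ(x) log μ(x) < ∞. -/
open Filter Real Topology MeasureTheory
open scoped ENNReal

namespace NS

/-!
For every `a`, the inequality `-p log p ≤ p t + e^(-t-1)` (the Legendre duality between `p log p`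
and `exp`) at `t = a |x|` bounds the entropy of `μ` by `a` times its first moment plus
`e^(-1) ∑ e^(-a|x|)`. Balls of radius `R` have at most `C e^(bR)` points, so grouping `x` by
`⌊|x|⌋` dominates the latter series by a geometric one as soon as `a > b`.
-/

lemma negMulLog_le_mul_add_exp {p : ℝ} (hp : 0 ≤ p) (t : ℝ) :
    negMulLog p ≤ p * t + exp (-t - 1) := by
  rcases hp.eq_or_lt with rfl | hp
  · simpa using (exp_pos _).le
  have h := add_one_le_exp (-t - 1 - log p)
  rw [sub_eq_add_neg (-t - 1), exp_add, exp_neg, exp_log hp, ← div_eq_mul_inv,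
    le_div_iff₀ hp] at h
  rw [negMulLog]
  linarith

lemma FiniteExpGrowth.exists_ncard_ball_le {G : Type*} [Group G] {d : G → G → ℝ}
    (h : FiniteExpGrowth d) :
    ∃ C b : ℝ, 0 ≤ b ∧
      ∀ R : ℝ, 0 ≤ R → ({x : G | d 1 x ≤ R}.ncard : ℝ) ≤ C * exp (b * R) := by
  obtain ⟨hfin, b₀, hb₀⟩ := h
  obtain ⟨R₁, hR₁⟩ := eventually_atTop.1 (eventually_map.1 hb₀)
  set R₀ := max R₁ 1
  set b := max b₀ 0
  refine ⟨exp (b * R₀), b, le_max_right _ _, fun R hR => ?_⟩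
  set S := max R R₀
  have hS : 0 < S := lt_max_of_lt_right (lt_max_of_lt_right one_pos)
  have hlog : log ({x : G | d 1 x ≤ S}.ncard : ℝ) ≤ b * S := by
    have := hR₁ S (le_max_of_le_right (le_max_left _ _))
    rw [growthFn, div_le_iff₀ hS, Nat.card_coe_set_eq] at this
    exact this.trans (mul_le_mul_of_nonneg_right (le_max_left _ _) hS.le)
  calc ({x : G | d 1 x ≤ R}.ncard : ℝ)
      ≤ {x : G | d 1 x ≤ S}.ncard :=
        Nat.cast_le.2 <|
          Set.ncard_le_ncard (fun x (hx : d 1 x ≤ R) => hx.trans (le_max_left _ _)) (hfin S)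
    _ ≤ exp (log ({x : G | d 1 x ≤ S}.ncard : ℝ)) := le_exp_log _
    _ ≤ exp (b * (R + R₀)) := by
        gcongr
        exact hlog.trans (mul_le_mul_of_nonneg_left
          (max_le (by linarith [le_max_right R₁ 1]) (by linarith)) (le_max_right _ _))
    _ = exp (b * R₀) * exp (b * R) := by rw [← exp_add]; ring_nf

lemma summable_exp_neg_mul_of_ncard_le {α : Type*} {f : α → ℝ} {C b a : ℝ}
    (hf : ∀ x, 0 ≤ f x) (hfin : ∀ n : ℕ, {x | f x ≤ n}.Finite)
    (hcard : ∀ n : ℕ, ({x | f x ≤ n}.ncard : ℝ) ≤ C * exp (b * n))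
    (hb : 0 ≤ b) (hba : b < a) :
    Summable fun x => exp (-(a * f x)) := by
  have hC : 0 ≤ C := by simpa using (Nat.cast_nonneg _).trans (hcard 0)
  have hgeo : Summable fun n : ℕ => C * exp b * exp (b - a) ^ n :=
    (summable_geometric_of_lt_one (exp_pos _).le (exp_lt_one_iff.2 (by linarith))).mul_left _
  have hfiber (u : Finset α) (n : ℕ) :
      ∑ x ∈ u with ⌊f x⌋₊ = n, exp (-(a * f x)) ≤ C * exp b * exp (b - a) ^ n := by
    have hterm :
        ∀ x ∈ u.filter (fun x => ⌊f x⌋₊ = n), exp (-(a * f x)) ≤ exp (-(a * n)) := by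
      intro x hx
      rw [← (Finset.mem_filter.1 hx).2]
      gcongr
      · linarith
      · exact Nat.floor_le (hf x)
    have hsub :
        (↑(u.filter fun x => ⌊f x⌋₊ = n) : Set α) ⊆ {x | f x ≤ (n + 1 : ℕ)} := by
      intro x hx
      have hx : ⌊f x⌋₊ = n := (Finset.mem_filter.1 hx).2
      simpa [← hx] using (Nat.lt_floor_add_one (f x)).le
    have hcard_fiber :
        ((u.filter fun x => ⌊f x⌋₊ = n).card : ℝ) ≤ C * exp (b * (n + 1 : ℕ)) := by
      rw [← Set.ncard_coe_finset]
      exact (Nat.cast_le.2 (Set.ncard_le_ncard hsub (hfin _))).trans (hcard _)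
    calc ∑ x ∈ u with ⌊f x⌋₊ = n, exp (-(a * f x))
        ≤ (u.filter fun x => ⌊f x⌋₊ = n).card * exp (-(a * n)) := by
          simpa using Finset.sum_le_card_nsmul _ _ _ hterm
      _ ≤ C * exp (b * (n + 1 : ℕ)) * exp (-(a * n)) := by gcongr
      _ = C * exp b * exp (b - a) ^ n := by
          push_cast
          rw [← exp_nat_mul, mul_assoc, mul_assoc, ← exp_add, ← exp_add]
          ring_nf
  refine summable_of_sum_le (c := ∑' n : ℕ, C * exp b * exp (b - a) ^ n)
    (fun x => (exp_pos _).le) fun u => ?_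
  calc ∑ x ∈ u, exp (-(a * f x))
      = ∑ n ∈ u.image (fun x => ⌊f x⌋₊),
          ∑ x ∈ u with ⌊f x⌋₊ = n, exp (-(a * f x)) :=
        (Finset.sum_fiberwise_of_maps_to (fun x hx => Finset.mem_image_of_mem _ hx) _).symm
    _ ≤ ∑ n ∈ u.image (fun x => ⌊f x⌋₊), C * exp b * exp (b - a) ^ n :=
        Finset.sum_le_sum fun n _ => hfiber u n
    _ ≤ ∑' n : ℕ, C * exp b * exp (b - a) ^ n :=
        hgeo.sum_le_tsum _ fun n _ => by positivity

theorem statement16_general {G : Type*} [Group G]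
    (d : G → G → ℝ) (hmet : IsLeftInvMetric d) (hgrow : FiniteExpGrowth d)
    (μ : PMF G) (hmom : FiniteFirstMoment d μ) :
    (∑' x : G, ENNReal.ofReal (Real.negMulLog ((μ x).toReal))) < ⊤ := by
  obtain ⟨C, b, hb, hball⟩ := hgrow.exists_ncard_ball_le
  have hexp : Summable fun x : G => exp (-((b + 1) * d 1 x)) :=
    summable_exp_neg_mul_of_ncard_le (fun x => hmet.1 1 x) (fun n => hgrow.1 n)
      (fun n => hball n n.cast_nonneg) hb (lt_add_one b)
  have hnonneg (x : G) : 0 ≤ negMulLog (μ x).toReal :=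
    negMulLog_nonneg ENNReal.toReal_nonneg
      (ENNReal.toReal_le_of_le_ofReal zero_le_one (by simpa using μ.coe_le_one x))
  have hent : Summable fun x => negMulLog (μ x).toReal := by
    refine Summable.of_nonneg_of_le hnonneg (fun x => ?_)
      ((hmom.mul_left (b + 1)).add (hexp.mul_left (exp (-1))))
    calc negMulLog (μ x).toReal
        ≤ (μ x).toReal * ((b + 1) * d 1 x) + exp (-((b + 1) * d 1 x) - 1) :=
          negMulLog_le_mul_add_exp ENNReal.toReal_nonneg _
      _ = (b + 1) * (d 1 x * (μ x).toReal) + exp (-1) * exp (-((b + 1) * d 1 x)) := by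
          rw [sub_eq_add_neg, exp_add]; ring
  rw [← ENNReal.ofReal_tsum_of_nonneg hnonneg hent]
  exact ENNReal.ofReal_lt_top

theorem statement16 {G : Type*} [Group G] [Countable G]
    (d : G → G → ℝ) (hmet : IsLeftInvMetric d) (hgrow : FiniteExpGrowth d)
    (μ : PMF G) (hmom : FiniteFirstMoment d μ) :
    (∑' x : G, ENNReal.ofReal (Real.negMulLog ((μ x).toReal))) < ⊤ :=
  statement16_general d hmet hgrow μ hmom

end NS
end
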